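/- arXiv:1609.00039 — 3 statements merged into one kernel-verified Lean document; each statement's English description precedes it below -/
import Mathlib

section
/- Let F : ℝ² → ℝ² be a bijection written in null coordinates as F(u,v) = (σ(u,v), τ(u,v)), and suppose there exist functions α, β, γ, δ : ℝ → ℝ with σ(u,v) = α(u) + β(v) and τ(u,v) = γ(u) + δ(v), such that moreover σ² and τ² also split additively: σ(u,v)² = a(u) + b(v) and τ(u,v)² = c(u) + d(v) for some functions a, b, c, d. Then either (σ depends only on u and τ depends only on v) or (σ depends only on v and τ depends only on u); i.e., there exist φ, ψ : ℝ → ℝ with either F(u,v) = (φ(u), ψ(v)) for all u, v, or F(u,v) = (φ(v), ψ(u)) for all u, v. -/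
/-!
Expanding `(α x + β y)² = a x + b y` shows that the cross term `2 α(x) β(y)` is itself a sum of a
function of `x` and a function of `y`, so `(α x - α x') (β y - β y') = 0` for all `x, x', y, y'`:
one of `α`, `β` is constant. Hence each component of `F` depends on a single variable, and
injectivity forbids both components to depend on the same one.
-/

section SeparableSquare

variable {X Y R : Type*} [CommRing R] [NoZeroDivisors R] [CharZero R]

theorem sub_mul_sub_eq_zero_of_add_sq_eq_add {α a : X → R} {β b : Y → R}
    (h : ∀ x y, (α x + β y) ^ 2 = a x + b y) (x x' : X) (y y' : Y) :
    (α x - α x') * (β y - β y') = 0 := by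
  have h2 : (2 : R) * ((α x - α x') * (β y - β y')) = 0 := by
    linear_combination h x y - h x' y - h x y' + h x' y'
  exact (mul_eq_zero.mp h2).resolve_left two_ne_zero

theorem forall_eq_or_forall_eq_of_add_sq_eq_add {σ : X → Y → R} {α a : X → R} {β b : Y → R}
    (hσ : ∀ x y, σ x y = α x + β y) (hσ2 : ∀ x y, σ x y ^ 2 = a x + b y) :
    (∀ x x' y, σ x y = σ x' y) ∨ (∀ x y y', σ x y = σ x y') := by
  have hsq : ∀ x y, (α x + β y) ^ 2 = a x + b y := fun x y => hσ x y ▸ hσ2 x y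
  by_contra! ⟨⟨x, x', y, hx⟩, ⟨x₀, y₀, y₀', hy⟩⟩
  have hα : α x - α x' ≠ 0 := fun h => hx (by rw [hσ, hσ]; linear_combination h)
  have hβ : β y₀ - β y₀' ≠ 0 := fun h => hy (by rw [hσ, hσ]; linear_combination h)
  exact mul_ne_zero hα hβ (sub_mul_sub_eq_zero_of_add_sq_eq_add hsq x x' y₀ y₀')

end SeparableSquare

section Injective

variable {X Y Z : Type*} {F : X × Y → Z}

theorem not_injective_of_forall_eq_left [Nontrivial X] [Nonempty Y]
    (hF : ∀ x x' y, F (x, y) = F (x', y)) : ¬ Function.Injective F := by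
  intro hinj
  obtain ⟨x, x', hx⟩ := exists_pair_ne X
  exact hx (congrArg Prod.fst (hinj (hF x x' (Classical.arbitrary Y))))

theorem not_injective_of_forall_eq_right [Nonempty X] [Nontrivial Y]
    (hF : ∀ x y y', F (x, y) = F (x, y')) : ¬ Function.Injective F := by
  intro hinj
  obtain ⟨y, y', hy⟩ := exists_pair_ne Y
  exact hy (congrArg Prod.snd (hinj (hF (Classical.arbitrary X) y y')))

end Injective

theorem stmt_9 (F : ℝ × ℝ → ℝ × ℝ) (hF : Function.Bijective F)
    (σ τ : ℝ → ℝ → ℝ)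
    (hστ : ∀ u v : ℝ, F (u, v) = (σ u v, τ u v))
    (α β γ δ : ℝ → ℝ)
    (h1 : ∀ u v : ℝ, σ u v = α u + β v)
    (h2 : ∀ u v : ℝ, τ u v = γ u + δ v)
    (a b c d : ℝ → ℝ)
    (h3 : ∀ u v : ℝ, (σ u v) ^ 2 = a u + b v)
    (h4 : ∀ u v : ℝ, (τ u v) ^ 2 = c u + d v) :
    ∃ φ ψ : ℝ → ℝ,
      (∀ u v : ℝ, F (u, v) = (φ u, ψ v)) ∨
      (∀ u v : ℝ, F (u, v) = (φ v, ψ u)) := by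
  rcases forall_eq_or_forall_eq_of_add_sq_eq_add h1 h3 with hσ | hσ <;>
    rcases forall_eq_or_forall_eq_of_add_sq_eq_add h2 h4 with hτ | hτ
  · refine absurd hF.injective (not_injective_of_forall_eq_left fun u u' v => ?_)
    rw [hστ, hστ, hσ u u' v, hτ u u' v]
  · exact ⟨fun v => σ 0 v, fun u => τ u 0, Or.inr fun u v => by rw [hστ, hσ u 0 v, hτ u v 0]⟩
  · exact ⟨fun u => σ u 0, fun v => τ 0 v, Or.inl fun u v => by rw [hστ, hσ u v 0, hτ u 0 v]⟩
  · refine absurd hF.injective (not_injective_of_forall_eq_right fun u v v' => ?_)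
    rw [hστ, hστ, hσ u v v', hτ u v v']
end

section
/- Every order isomorphism F of (ℝ², ≤×≤) (the product order) onto itself either splits coordinatewise, F(u,v) = (φ(u), ψ(v)) with φ, ψ order isomorphisms of ℝ, or swaps coordinates, F(u,v) = (φ(v), ψ(u)) with φ, ψ order isomorphisms of ℝ. -/
/-!
Both coordinates of `F` are lattice homomorphisms `ℝ × ℝ → ℝ`, and a lattice homomorphism from a
product of two chains into a chain depends on one factor only: on every rectangle it is constant
along both horizontal or along both vertical sides, so a pair of values that differ along a vertical
side makes one row constant, and a constant row forces independence of the first factor everywhere.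
Injectivity of `F` excludes both coordinates depending on the same factor.
-/

namespace LatticeHom

variable {α β γ : Type*} [LinearOrder α] [LinearOrder β] [LinearOrder γ]
  (h : LatticeHom (α × β) γ)

/-- The off-diagonal corners of a rectangle have the diagonal corners as meet and join, and in a
chain a meet or a join is one of its arguments. -/
theorem prod_rectangle_cases {u u' : α} {v v' : β} (hu : u ≤ u') (hv : v ≤ v') :
    (h (u, v) = h (u, v') ∧ h (u', v) = h (u', v')) ∨
      (h (u, v) = h (u', v) ∧ h (u, v') = h (u', v')) := by
  have hinf : h (u, v') ⊓ h (u', v) = h (u, v) := by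
    rw [← map_inf]; congr 1; ext <;> simp [hu, hv]
  have hsup : h (u, v') ⊔ h (u', v) = h (u', v') := by
    rw [← map_sup]; congr 1; ext <;> simp [hu, hv]
  rcases le_total (h (u, v')) (h (u', v)) with hle | hle
  · rw [inf_eq_left.2 hle] at hinf
    rw [sup_eq_right.2 hle] at hsup
    exact Or.inl ⟨hinf.symm, hsup⟩
  · rw [inf_eq_right.2 hle] at hinf
    rw [sup_eq_left.2 hle] at hsup
    exact Or.inr ⟨hinf.symm, hsup⟩

theorem apply_mk_eq_of_apply_ne {u₀ : α} {v₁ v₂ : β} (hne : h (u₀, v₁) ≠ h (u₀, v₂))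
    (hv : v₁ ≤ v₂) (x : α) : h (x, v₂) = h (u₀, v₂) := by
  rcases le_total u₀ x with hx | hx
  · rcases h.prod_rectangle_cases hx hv with ⟨hvert, -⟩ | ⟨-, hhor⟩
    exacts [absurd hvert hne, hhor.symm]
  · rcases h.prod_rectangle_cases hx hv with ⟨-, hvert⟩ | ⟨-, hhor⟩
    exacts [absurd hvert hne, hhor]

theorem apply_mk_eq_of_forall_apply_mk_eq {w : β} {c : γ} (hw : ∀ x, h (x, w) = c)
    (a b : α) (v : β) : h (a, v) = h (b, v) := by
  wlog hab : a ≤ b generalizing a b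
  · exact (this b a (le_of_not_ge hab)).symm
  rcases le_total v w with hvw | hvw
  · rcases h.prod_rectangle_cases hab hvw with ⟨ha, hb⟩ | ⟨hor, -⟩
    exacts [by rw [ha, hb, hw, hw], hor]
  · rcases h.prod_rectangle_cases hab hvw with ⟨ha, hb⟩ | ⟨-, hor⟩
    exacts [by rw [← ha, ← hb, hw, hw], hor]

theorem exists_eq_comp_fst_or_snd [Nonempty β] :
    (∃ f : α → γ, ⇑h = f ∘ Prod.fst) ∨ (∃ g : β → γ, ⇑h = g ∘ Prod.snd) := by
  by_cases hfst : ∀ u v v', h (u, v) = h (u, v')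
  · obtain ⟨b⟩ := ‹Nonempty β›
    exact Or.inl ⟨fun u ↦ h (u, b), funext fun p ↦ hfst p.1 p.2 b⟩
  push Not at hfst
  obtain ⟨u₀, v₁, v₂, hne⟩ := hfst
  obtain ⟨w, hw⟩ : ∃ w, ∀ x, h (x, w) = h (u₀, w) := by
    rcases le_total v₁ v₂ with hv | hv
    exacts [⟨v₂, h.apply_mk_eq_of_apply_ne hne hv⟩, ⟨v₁, h.apply_mk_eq_of_apply_ne hne.symm hv⟩]
  exact Or.inr ⟨fun v ↦ h (u₀, v),
    funext fun p ↦ h.apply_mk_eq_of_forall_apply_mk_eq hw p.1 u₀ p.2⟩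

end LatticeHom

theorem OrderIso.strictMono_and_bijective_of_coe_eq_prodMap {α β γ δ : Type*} [Preorder α]
    [Preorder β] [Preorder γ] [Preorder δ] [Nonempty α] [Nonempty β] (e : α × β ≃o γ × δ)
    {f : α → γ} {g : β → δ} (he : ⇑e = Prod.map f g) :
    StrictMono f ∧ StrictMono g ∧ Function.Bijective f ∧ Function.Bijective g := by
  obtain ⟨a⟩ := ‹Nonempty α›
  obtain ⟨b⟩ := ‹Nonempty β›
  have hle : ∀ p q, p ≤ q ↔ Prod.map f g p ≤ Prod.map f g q := fun p q ↦ by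
    rw [← he, e.le_iff_le]
  refine ⟨strictMono_of_le_iff_le fun x y ↦ ?_, strictMono_of_le_iff_le fun x y ↦ ?_,
    Prod.map_bijective.1 (he ▸ e.bijective)⟩
  · simpa using hle (x, b) (y, b)
  · simpa using hle (a, x) (a, y)

theorem stmt_13 (F : ℝ × ℝ → ℝ × ℝ) (hF : Function.Bijective F)
    (hord : ∀ p q : ℝ × ℝ, (p.1 ≤ q.1 ∧ p.2 ≤ q.2) ↔
      ((F p).1 ≤ (F q).1 ∧ (F p).2 ≤ (F q).2)) :
    ∃ φ ψ : ℝ → ℝ, StrictMono φ ∧ StrictMono ψ ∧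
      Function.Bijective φ ∧ Function.Bijective ψ ∧
      ((∀ u v : ℝ, F (u, v) = (φ u, ψ v)) ∨
       (∀ u v : ℝ, F (u, v) = (φ v, ψ u))) := by
  let e : ℝ × ℝ ≃o ℝ × ℝ := ⟨Equiv.ofBijective F hF, fun {p q} ↦ (hord p q).symm⟩
  rcases (LatticeHom.fst.comp (e : LatticeHom (ℝ × ℝ) (ℝ × ℝ))).exists_eq_comp_fst_or_snd
    with ⟨f, hf⟩ | ⟨f, hf⟩ <;>
  rcases (LatticeHom.snd.comp (e : LatticeHom (ℝ × ℝ) (ℝ × ℝ))).exists_eq_comp_fst_or_snd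
    with ⟨g, hg⟩ | ⟨g, hg⟩
  · have : F (0, 0) = F (0, 1) :=
      Prod.ext ((congrFun hf (0, 0)).trans (congrFun hf (0, 1)).symm)
        ((congrFun hg (0, 0)).trans (congrFun hg (0, 1)).symm)
    simpa using hF.1 this
  · have hsplit : F = Prod.map f g := funext fun p ↦ Prod.ext (congrFun hf p) (congrFun hg p)
    obtain ⟨hφ, hψ, hφ', hψ'⟩ := e.strictMono_and_bijective_of_coe_eq_prodMap hsplit
    exact ⟨f, g, hφ, hψ, hφ', hψ', Or.inl fun u v ↦ congrFun hsplit (u, v)⟩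
  · let e' := OrderIso.prodComm.trans e
    have hswap : ⇑e' = Prod.map f g :=
      funext fun p ↦ Prod.ext (congrFun hf p.swap) (congrFun hg p.swap)
    obtain ⟨hφ, hψ, hφ', hψ'⟩ := e'.strictMono_and_bijective_of_coe_eq_prodMap hswap
    exact ⟨f, g, hφ, hψ, hφ', hψ', Or.inr fun u v ↦ congrFun hswap (v, u)⟩
  · have : F (0, 0) = F (1, 0) :=
      Prod.ext ((congrFun hf (0, 0)).trans (congrFun hf (1, 0)).symm)
        ((congrFun hg (0, 0)).trans (congrFun hg (1, 0)).symm)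
    simpa using hF.1 this
end

section
/- Two-dimensional Minkowski spacetime is strongly causal; consequently, every causal isomorphism F : ℝ²₁ → ℝ²₁ is a homeomorphism. -/
/-!
For linear orders, a closed interval `Icc a b` of a product `α × β` fails to be a chain exactly
when `a` lies strictly below `b` in both coordinates. So this strict relation is expressed by
the partial order alone and is preserved by order isomorphisms. The open boxes between two
strictly related points form a neighbourhood basis of the product topology, and an order
isomorphism maps such boxes onto boxes; hence it is a homeomorphism.
-/

open Set Filter Topology

variable {α β γ δ : Type*} [LinearOrder α] [LinearOrder β] [LinearOrder γ] [LinearOrder δ]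

theorem Prod.not_isChain_Icc_iff {a b : α × β} :
    ¬ IsChain (· ≤ ·) (Icc a b) ↔ a.1 < b.1 ∧ a.2 < b.2 := by
  constructor
  · intro hne
    by_contra! hab
    refine hne fun u hu v hv _ => ?_
    simp only [mem_Icc, Prod.le_def] at hu hv ⊢
    by_cases h₁ : a.1 < b.1
    · have := hab h₁
      rcases le_total u.1 v.1 with h | h <;> [left; right] <;> exact ⟨h, by order⟩
    · rcases le_total u.2 v.2 with h | h <;> [left; right] <;> exact ⟨by order, h⟩
  · rintro ⟨h₁, h₂⟩ hc
    have hu : (b.1, a.2) ∈ Icc a b := ⟨⟨h₁.le, le_rfl⟩, ⟨le_rfl, h₂.le⟩⟩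
    have hv : (a.1, b.2) ∈ Icc a b := ⟨⟨le_rfl, h₂.le⟩, ⟨h₁.le, le_rfl⟩⟩
    rcases hc.total hu hv with h | h
    · exact h₁.not_ge h.1
    · exact h₂.not_ge h.2

theorem OrderIso.isChain_Icc_iff {α β : Type*} [Preorder α] [Preorder β] (e : α ≃o β) (a b : α) :
    IsChain (· ≤ ·) (Icc (e a) (e b)) ↔ IsChain (· ≤ ·) (Icc a b) := by
  rw [← e.image_Icc]
  refine ⟨fun h => ?_, e.monotone.isChain_image⟩
  simpa only [e.symm_image_image] using e.symm.monotone.isChain_image h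

theorem OrderIso.lt_and_lt_prod_iff (e : α × β ≃o γ × δ) {a b : α × β} :
    (e a).1 < (e b).1 ∧ (e a).2 < (e b).2 ↔ a.1 < b.1 ∧ a.2 < b.2 := by
  rw [← Prod.not_isChain_Icc_iff, ← Prod.not_isChain_Icc_iff, e.isChain_Icc_iff]

theorem OrderIso.preimage_Ioo_prod_Ioo (e : α × β ≃o γ × δ) (a b : γ × δ) :
    e ⁻¹' (Ioo a.1 b.1 ×ˢ Ioo a.2 b.2) =
      Ioo (e.symm a).1 (e.symm b).1 ×ˢ Ioo (e.symm a).2 (e.symm b).2 := by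
  ext x
  have hlow := e.lt_and_lt_prod_iff (a := e.symm a) (b := x)
  have hupp := e.lt_and_lt_prod_iff (a := x) (b := e.symm b)
  simp only [OrderIso.apply_symm_apply] at hlow hupp
  simp only [mem_preimage, mem_prod, mem_Ioo]
  tauto

section Topology

variable [TopologicalSpace α] [OrderTopology α] [TopologicalSpace β] [OrderTopology β]
  [TopologicalSpace γ] [OrderTopology γ] [NoMaxOrder γ] [NoMinOrder γ]
  [TopologicalSpace δ] [OrderTopology δ] [NoMaxOrder δ] [NoMinOrder δ]

theorem OrderIso.continuous_prod (e : α × β ≃o γ × δ) : Continuous e := by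
  refine continuous_iff_continuousAt.2 fun x => ?_
  have hbasis := (nhds_basis_Ioo (e x).1).prod_nhds (nhds_basis_Ioo (e x).2)
  rw [Prod.mk.eta] at hbasis
  rw [ContinuousAt, hbasis.tendsto_right_iff]
  rintro ⟨l₁, l₂⟩ hx
  have hopen : IsOpen (e ⁻¹' (Ioo l₁.1 l₁.2 ×ˢ Ioo l₂.1 l₂.2)) :=
    e.preimage_Ioo_prod_Ioo (l₁.1, l₂.1) (l₁.2, l₂.2) ▸ isOpen_Ioo.prod isOpen_Ioo
  exact hopen.mem_nhds ⟨hx.1, hx.2⟩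

variable [NoMaxOrder α] [NoMinOrder α] [NoMaxOrder β] [NoMinOrder β]

def OrderIso.toHomeomorphProd (e : α × β ≃o γ × δ) : α × β ≃ₜ γ × δ where
  toEquiv := e.toEquiv
  continuous_toFun := e.continuous_prod
  continuous_invFun := e.symm.continuous_prod

end Topology

theorem stmt_18 (F : ℝ × ℝ → ℝ × ℝ) (hF : Function.Bijective F)
    (hord : ∀ p q : ℝ × ℝ, (p.1 ≤ q.1 ∧ p.2 ≤ q.2) ↔
      ((F p).1 ≤ (F q).1 ∧ (F p).2 ≤ (F q).2)) :
    ∃ e : (ℝ × ℝ) ≃ₜ (ℝ × ℝ), ∀ p, e p = F p := by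
  let e : ℝ × ℝ ≃o ℝ × ℝ :=
    { Equiv.ofBijective F hF with map_rel_iff' := fun {p q} => (hord p q).symm }
  exact ⟨e.toHomeomorphProd, fun _ => rfl⟩
end
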